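/- arXiv:math/0209231 — 7 statements merged into one kernel-verified Lean document; each statement's English description precedes it below -/
import Mathlib

section
/- Let T be a bounded operator on a Hilbert space with ‖T^n‖ ≤ e^{-εn} for all n, and let n_diss = min{n : ‖T^n‖ < 1/e}. If 1 is not in the spectrum of T, then ‖(I−T)^{-1}‖·(1 − e^{-1}) ≤ n_diss ≤ 1/ε + 1. -/
/-!
Truncating the Neumann series at `n` gives `(1 - T)⁻¹ = ∑_{i<n} Tⁱ + (1 - T)⁻¹ Tⁿ`; as every power of
`T` is a contraction, `‖(1 - T)⁻¹‖ (1 - ‖Tⁿ‖) ≤ n`, and at `n = n_diss` we have `‖Tⁿ‖ < 1/e`.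
For the upper bound, `n = ⌊1/ε⌋ + 1` already satisfies `‖Tⁿ‖ ≤ e^{-εn} < 1/e`.
-/

open Real

theorem Ring.inverse_one_sub_eq_geom_sum_add {R : Type*} [Ring R] {a : R} (h : IsUnit (1 - a))
    (n : ℕ) :
    Ring.inverse (1 - a) = ∑ i ∈ Finset.range n, a ^ i + Ring.inverse (1 - a) * a ^ n := by
  have hgeom : Ring.inverse (1 - a) * (1 - a ^ n) = ∑ i ∈ Finset.range n, a ^ i := by
    rw [← mul_neg_geom_sum a n, ← mul_assoc, Ring.inverse_mul_cancel _ h, one_mul]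
  rw [← hgeom, mul_sub, mul_one, sub_add_cancel]

section SeminormedRing

variable {A : Type*} [SeminormedRing A]

theorem norm_inverse_one_sub_mul_le {a : A} (h : IsUnit (1 - a)) (n : ℕ) :
    ‖Ring.inverse (1 - a)‖ * (1 - ‖a ^ n‖) ≤ ∑ i ∈ Finset.range n, ‖a ^ i‖ := by
  have hsplit : ‖Ring.inverse (1 - a)‖ ≤
      ∑ i ∈ Finset.range n, ‖a ^ i‖ + ‖Ring.inverse (1 - a)‖ * ‖a ^ n‖ :=
    calc ‖Ring.inverse (1 - a)‖
        = ‖∑ i ∈ Finset.range n, a ^ i + Ring.inverse (1 - a) * a ^ n‖ := by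
          rw [← Ring.inverse_one_sub_eq_geom_sum_add h]
      _ ≤ ‖∑ i ∈ Finset.range n, a ^ i‖ + ‖Ring.inverse (1 - a) * a ^ n‖ := norm_add_le _ _
      _ ≤ ∑ i ∈ Finset.range n, ‖a ^ i‖ + ‖Ring.inverse (1 - a)‖ * ‖a ^ n‖ :=
          add_le_add (norm_sum_le _ _) (norm_mul_le _ _)
  rw [mul_sub, mul_one]
  linarith

/-- Junk value `0` when `‖aⁿ‖ ≥ 1/e` for every `n ≥ 1`. -/
noncomputable def dissipationTime (a : A) : ℕ :=
  sInf {n : ℕ | 0 < n ∧ ‖a ^ n‖ < exp (-1)}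

theorem dissipationTime_spec {a : A} (h : ∃ n, 0 < n ∧ ‖a ^ n‖ < exp (-1)) :
    0 < dissipationTime a ∧ ‖a ^ dissipationTime a‖ < exp (-1) :=
  Nat.sInf_mem h

theorem dissipationTime_le {a : A} {n : ℕ} (hn : 0 < n) (h : ‖a ^ n‖ < exp (-1)) :
    dissipationTime a ≤ n :=
  Nat.sInf_le ⟨hn, h⟩

theorem norm_inverse_one_sub_mul_le_dissipationTime {a : A} (h : IsUnit (1 - a))
    (hpow : ∀ i, ‖a ^ i‖ ≤ 1) (hdiss : ∃ n, 0 < n ∧ ‖a ^ n‖ < exp (-1)) :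
    ‖Ring.inverse (1 - a)‖ * (1 - exp (-1)) ≤ dissipationTime a := by
  have hsmall := (dissipationTime_spec hdiss).2
  calc ‖Ring.inverse (1 - a)‖ * (1 - exp (-1))
      ≤ ‖Ring.inverse (1 - a)‖ * (1 - ‖a ^ dissipationTime a‖) := by gcongr
    _ ≤ ∑ i ∈ Finset.range (dissipationTime a), ‖a ^ i‖ := norm_inverse_one_sub_mul_le h _
    _ ≤ ∑ _i ∈ Finset.range (dissipationTime a), (1 : ℝ) := Finset.sum_le_sum fun i _ => hpow i
    _ = dissipationTime a := by simp

variable {ε : ℝ} {a : A}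

theorem norm_pow_floor_inv_add_one_lt (hε : 0 < ε)
    (ha : ∀ n : ℕ, 1 ≤ n → ‖a ^ n‖ ≤ exp (-(ε * n))) :
    ‖a ^ (⌊1 / ε⌋₊ + 1)‖ < exp (-1) := by
  have hfloor : 1 < ε * ((⌊1 / ε⌋₊ : ℝ) + 1) := by
    rw [← div_lt_iff₀' hε]
    exact Nat.lt_floor_add_one _
  calc ‖a ^ (⌊1 / ε⌋₊ + 1)‖ ≤ exp (-(ε * ((⌊1 / ε⌋₊ + 1 : ℕ) : ℝ))) := ha _ le_add_self
    _ < exp (-1) := by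
      rw [exp_lt_exp]
      push_cast
      linarith

theorem dissipationTime_le_inv_add_one (hε : 0 < ε)
    (ha : ∀ n : ℕ, 1 ≤ n → ‖a ^ n‖ ≤ exp (-(ε * n))) :
    (dissipationTime a : ℝ) ≤ 1 / ε + 1 := by
  have hle := dissipationTime_le (Nat.succ_pos _) (norm_pow_floor_inv_add_one_lt hε ha)
  calc (dissipationTime a : ℝ) ≤ ((⌊1 / ε⌋₊ + 1 : ℕ) : ℝ) := by exact_mod_cast hle
    _ ≤ 1 / ε + 1 := by
      push_cast
      linarith [Nat.floor_le (one_div_nonneg.mpr hε.le)]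

end SeminormedRing

theorem ContinuousLinearMap.norm_pow_le_one_of_exp_decay {𝕜 E : Type*} [NontriviallyNormedField 𝕜]
    [SeminormedAddCommGroup E] [NormedSpace 𝕜 E] {T : E →L[𝕜] E} {ε : ℝ} (hε : 0 ≤ ε)
    (hT : ∀ n : ℕ, 1 ≤ n → ‖T ^ n‖ ≤ exp (-(ε * n))) (k : ℕ) :
    ‖T ^ k‖ ≤ 1 := by
  rcases k with _ | k
  · exact ContinuousLinearMap.norm_id_le
  · calc ‖T ^ (k + 1)‖ ≤ exp (-(ε * ((k + 1 : ℕ) : ℝ))) := hT _ le_add_self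
      _ ≤ 1 := exp_le_one_iff.mpr (neg_nonpos.mpr (by positivity))

theorem dissipation_time_resolvent_bounds_general
    {H : Type*} [NormedAddCommGroup H] [InnerProductSpace ℂ H]
    (T : H →L[ℂ] H) (ε : ℝ) (hε : 0 < ε)
    (hT : ∀ n : ℕ, 1 ≤ n → ‖T ^ n‖ ≤ Real.exp (-(ε * n)))
    (hspec : (1 : ℂ) ∉ spectrum ℂ T) :
    ‖Ring.inverse ((1 : H →L[ℂ] H) - T)‖ * (1 - Real.exp (-1)) ≤
        ((sInf {n : ℕ | 0 < n ∧ ‖T ^ n‖ < Real.exp (-1)} : ℕ) : ℝ) ∧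
      ((sInf {n : ℕ | 0 < n ∧ ‖T ^ n‖ < Real.exp (-1)} : ℕ) : ℝ) ≤ 1 / ε + 1 := by
  have hunit : IsUnit (1 - T) := by simpa using spectrum.notMem_iff.mp hspec
  have hdiss : ∃ n, 0 < n ∧ ‖T ^ n‖ < exp (-1) :=
    ⟨_, Nat.succ_pos _, norm_pow_floor_inv_add_one_lt hε hT⟩
  exact ⟨norm_inverse_one_sub_mul_le_dissipationTime hunit
      (ContinuousLinearMap.norm_pow_le_one_of_exp_decay hε.le hT) hdiss,
    dissipationTime_le_inv_add_one hε hT⟩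

/-- resolvent lower bound and `1/ε` upper bound for dissipation time. -/
theorem dissipation_time_resolvent_bounds
    {H : Type*} [NormedAddCommGroup H] [InnerProductSpace ℂ H] [CompleteSpace H]
    (T : H →L[ℂ] H) (ε : ℝ) (hε : 0 < ε)
    (hT : ∀ n : ℕ, 1 ≤ n → ‖T ^ n‖ ≤ Real.exp (-(ε * n)))
    (hspec : (1 : ℂ) ∉ spectrum ℂ T) :
    ‖Ring.inverse ((1 : H →L[ℂ] H) - T)‖ * (1 - Real.exp (-1)) ≤
        ((sInf {n : ℕ | 0 < n ∧ ‖T ^ n‖ < Real.exp (-1)} : ℕ) : ℝ) ∧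
      ((sInf {n : ℕ | 0 < n ∧ ‖T ^ n‖ < Real.exp (-1)} : ℕ) : ℝ) ≤ 1 / ε + 1 :=
  dissipation_time_resolvent_bounds_general T ε hε hT hspec
end

section
/- Suppose U is an isometry on a Hilbert space H, G_ε is a self-adjoint operator with 0 ≤ G_ε ≤ I, and T_ε = G_ε U. If U has an eigenvector h with Uh = e^{iφ}h and ‖(I − G_ε)h‖ ≤ Cε‖h‖ for a constant C independent of ε, then ‖(I − e^{-iφ}T_ε)^{-1}‖ ≥ 1/(Cε), and hence the dissipation time of T_ε is bounded below by a constant times 1/ε. -/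
/-- eigenvectors of the isometry that are little affected by the noise
force a `1/(Cε)` lower bound on the resolvent norm, and hence a `const/ε` lower
bound on the dissipation time. -/
theorem dissipation_time_lower_bound_from_eigenvector
    {H : Type*} [NormedAddCommGroup H] [InnerProductSpace ℂ H] [CompleteSpace H]
    (U G : H →L[ℂ] H) (ε C : ℝ) (hε : 0 < ε) (hC : 0 < C)
    (hU : ∀ x : H, ‖U x‖ = ‖x‖)
    (hGsa : IsSelfAdjoint G) (hGpos : G.IsPositive)
    (hGle : ((1 : H →L[ℂ] H) - G).IsPositive)
    (φ : ℝ) (h : H) (hh : h ≠ 0) (heig : U h = Complex.exp (Complex.I * φ) • h)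
    (hnoise : ‖((1 : H →L[ℂ] H) - G) h‖ ≤ C * ε * ‖h‖)
    (hcontr : ∀ n : ℕ, 1 ≤ n → ‖(G.comp U) ^ n‖ ≤ Real.exp (-(ε * n)))
    (hspec : (1 : ℂ) ∉ spectrum ℂ (Complex.exp (-(Complex.I * φ)) • (G.comp U))) :
    1 / (C * ε) ≤
        ‖Ring.inverse ((1 : H →L[ℂ] H) - Complex.exp (-(Complex.I * φ)) • (G.comp U))‖ ∧
      (1 - Real.exp (-1)) / (C * ε) ≤
        ((sInf {n : ℕ | 0 < n ∧ ‖(G.comp U) ^ n‖ < Real.exp (-1)} : ℕ) : ℝ) := by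
  set c : ℂ := Complex.exp (-(Complex.I * φ)) with hc
  set T : H →L[ℂ] H := G.comp U with hT
  set A : H →L[ℂ] H := c • T with hA
  have hCε : 0 < C * ε := mul_pos hC hε
  have hpos : 0 < ‖h‖ := norm_pos_iff.mpr hh
  have hnormc : ‖c‖ = 1 := by
    simp [hc, Complex.norm_exp]
  -- key: (1 - A) h = (1 - G) h
  have hkey : ((1 : H →L[ℂ] H) - A) h = ((1 : H →L[ℂ] H) - G) h := by
    have : A h = G h := by
      have hmul : c * Complex.exp (Complex.I * φ) = 1 := by
        rw [hc, ← Complex.exp_add]; simp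
      simp [hA, hT, ContinuousLinearMap.smul_apply, ContinuousLinearMap.comp_apply,
        heig, map_smul, smul_smul, hmul]
    simp [ContinuousLinearMap.sub_apply, this]
  have hkeynorm : ‖h - A h‖ ≤ C * ε * ‖h‖ := by
    have : ((1 : H →L[ℂ] H) - A) h = h - A h := by
      simp [ContinuousLinearMap.sub_apply]
    rw [← this, hkey]; exact hnoise
  -- ‖A^k‖ ≤ 1 for all k
  have hAk : ∀ k : ℕ, ‖A ^ k‖ ≤ 1 := by
    intro k
    have hpow : A ^ k = c ^ k • T ^ k := by rw [hA, smul_pow]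
    rw [hpow, norm_smul, norm_pow, hnormc, one_pow, one_mul]
    rcases Nat.eq_zero_or_pos k with hk | hk
    · subst hk; rw [pow_zero]; exact ContinuousLinearMap.norm_id_le
    · exact (hcontr k hk).trans (Real.exp_le_one_iff.mpr (neg_nonpos.mpr (by positivity)))
  -- part 1
  have hunit : IsUnit ((1 : H →L[ℂ] H) - A) := by
    have := spectrum.notMem_iff.mp hspec
    simpa using this
  have part1 : 1 / (C * ε) ≤ ‖Ring.inverse ((1 : H →L[ℂ] H) - A)‖ := by
    have hinv : Ring.inverse ((1 : H →L[ℂ] H) - A) * ((1 : H →L[ℂ] H) - A) = 1 :=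
      Ring.inverse_mul_cancel _ hunit
    have hh' : h = Ring.inverse ((1 : H →L[ℂ] H) - A) (((1 : H →L[ℂ] H) - A) h) := by
      have := congrArg (fun (S : H →L[ℂ] H) => S h) hinv
      simpa [ContinuousLinearMap.mul_apply] using this.symm
    have hle : ‖h‖ ≤ ‖Ring.inverse ((1 : H →L[ℂ] H) - A)‖ * (C * ε * ‖h‖) := by
      calc ‖h‖ = ‖Ring.inverse ((1 : H →L[ℂ] H) - A) (((1 : H →L[ℂ] H) - A) h)‖ := by
              rw [← hh']
        _ ≤ ‖Ring.inverse ((1 : H →L[ℂ] H) - A)‖ * ‖((1 : H →L[ℂ] H) - A) h‖ :=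
              ContinuousLinearMap.le_opNorm _ _
        _ ≤ ‖Ring.inverse ((1 : H →L[ℂ] H) - A)‖ * (C * ε * ‖h‖) := by
              rw [hkey]; exact mul_le_mul_of_nonneg_left hnoise (norm_nonneg _)
    rw [div_le_iff₀ hCε]
    nlinarith [hle, hpos]
  -- telescoping bound
  have htel : ∀ n : ℕ, ‖h - (A ^ n) h‖ ≤ n * (C * ε * ‖h‖) := by
    intro n
    induction n with
    | zero => simp
    | succ n ih =>
      have hdecomp : h - (A ^ (n + 1)) h = (h - (A ^ n) h) + (A ^ n) (h - A h) := by
        have : (A ^ (n + 1)) h = (A ^ n) (A h) := by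
          rw [pow_succ]; simp [ContinuousLinearMap.mul_apply]
        rw [this, map_sub]; abel
      rw [hdecomp]
      calc ‖(h - (A ^ n) h) + (A ^ n) (h - A h)‖
          ≤ ‖h - (A ^ n) h‖ + ‖(A ^ n) (h - A h)‖ := norm_add_le _ _
        _ ≤ n * (C * ε * ‖h‖) + ‖A ^ n‖ * ‖h - A h‖ :=
              add_le_add ih (ContinuousLinearMap.le_opNorm _ _)
        _ ≤ n * (C * ε * ‖h‖) + 1 * (C * ε * ‖h‖) :=
              add_le_add le_rfl
                (mul_le_mul (hAk n) hkeynorm (norm_nonneg _) zero_le_one)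
        _ = (n + 1 : ℕ) * (C * ε * ‖h‖) := by push_cast; ring
  -- the set is nonempty
  set N : Set ℕ := {n : ℕ | 0 < n ∧ ‖T ^ n‖ < Real.exp (-1)} with hN
  have hne : N.Nonempty := by
    refine ⟨⌈1 / ε⌉₊ + 1, Nat.succ_pos _, ?_⟩
    have h1 : (1 : ℝ) / ε ≤ ⌈1 / ε⌉₊ := Nat.le_ceil _
    have h2 : (1 : ℝ) < ε * (⌈1 / ε⌉₊ + 1 : ℕ) := by
      push_cast
      rw [mul_add, mul_one]
      have : (1:ℝ) ≤ ε * ⌈1 / ε⌉₊ := (div_le_iff₀' hε).mp h1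
      linarith
    calc ‖T ^ (⌈1 / ε⌉₊ + 1)‖ ≤ Real.exp (-(ε * (⌈1 / ε⌉₊ + 1 : ℕ))) :=
          hcontr _ (Nat.succ_le_succ (Nat.zero_le _))
      _ < Real.exp (-1) := Real.exp_lt_exp.mpr (by linarith)
  -- part 2
  have part2 : (1 - Real.exp (-1)) / (C * ε) ≤ ((sInf N : ℕ) : ℝ) := by
    have hmem : sInf N ∈ N := Nat.sInf_mem hne
    obtain ⟨hn0, hnlt⟩ := hmem
    set n := sInf N
    -- ‖(A^n) h‖ = ‖(T^n) h‖
    have hAn : ‖(A ^ n) h‖ = ‖(T ^ n) h‖ := by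
      rw [hA, smul_pow, ContinuousLinearMap.smul_apply, norm_smul, norm_pow, hnormc,
        one_pow, one_mul]
    have hTn : ‖(T ^ n) h‖ < Real.exp (-1) * ‖h‖ := by
      calc ‖(T ^ n) h‖ ≤ ‖T ^ n‖ * ‖h‖ := ContinuousLinearMap.le_opNorm _ _
        _ < Real.exp (-1) * ‖h‖ := by exact mul_lt_mul_of_pos_right hnlt hpos
    have hlb : ‖h‖ - n * (C * ε * ‖h‖) ≤ ‖(A ^ n) h‖ := by
      have := norm_sub_norm_le h ((A ^ n) h)
      have := htel n
      linarith [norm_sub_norm_le h ((A ^ n) h), htel n]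
    have hfin : 1 - Real.exp (-1) < n * (C * ε) := by
      have : ‖h‖ - n * (C * ε * ‖h‖) < Real.exp (-1) * ‖h‖ := by
        rw [← hAn] at hTn; linarith
      nlinarith
    rw [div_le_iff₀ hCε]
    linarith
  exact ⟨part1, part2⟩
end

section
/- Let A ∈ SL(d,ℤ) (integer matrix with determinant ±1) and let G_ε be the noise operator on L²₀(𝕋^d) acting diagonally in Fourier basis by multiplication with e^{-ε|k|^{2α}}, and U_F the Koopman operator of the automorphism F = A^†. Then the operator norm of T^n, where T = G_ε U_F, equals exp(−ε · min over nonzero k ∈ ℤ^d of Σ_{l=1}^n |A^l k|^{2α}). -/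
/-!
Since `A` is invertible, `k ↦ A k` permutes the nonzero frequencies injectively, so `T` and all
its powers are weighted shifts: `Tⁿ e_k = c_k e_{Aⁿk}` with `|c_k| = exp(-ε Σ_{l=1}^n |Aˡk|^{2α})`.
An operator sending a Hilbert basis to an orthonormal family times scalars has norm `sup |c_k|`
(Parseval on finite sums, then pass to the limit along the basis expansion), and since
`s ↦ exp(-ε s)` is decreasing and continuous, the supremum is `exp(-ε inf_k Σ_l |Aˡk|^{2α})`.
-/

open Finset Filter Topology Function Matrix

section WeightedShift

variable {ι 𝕜 E F : Type*} [RCLike 𝕜] [NormedAddCommGroup E] [InnerProductSpace 𝕜 E]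
  [NormedAddCommGroup F] [InnerProductSpace 𝕜 F]

theorem Orthonormal.norm_sum_smul_sq {v : ι → E} (hv : Orthonormal 𝕜 v) (a : ι → 𝕜)
    (s : Finset ι) : ‖∑ i ∈ s, a i • v i‖ ^ 2 = ∑ i ∈ s, ‖a i‖ ^ 2 := by
  rw [← RCLike.ofReal_inj (K := 𝕜), RCLike.ofReal_pow, ← inner_self_eq_norm_sq_to_K,
    hv.inner_sum]
  push_cast
  exact sum_congr rfl fun i _ => RCLike.conj_mul (a i)

theorem Orthonormal.norm_sum_mul_smul_le {v : ι → E} {w : ι → F} (hv : Orthonormal 𝕜 v)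
    (hw : Orthonormal 𝕜 w) {c : ι → 𝕜} {M : ℝ} (hM : 0 ≤ M) (hc : ∀ i, ‖c i‖ ≤ M)
    (a : ι → 𝕜) (s : Finset ι) :
    ‖∑ i ∈ s, (a i * c i) • w i‖ ≤ M * ‖∑ i ∈ s, a i • v i‖ := by
  refine le_of_sq_le_sq ?_ (by positivity)
  rw [hw.norm_sum_smul_sq, mul_pow, hv.norm_sum_smul_sq, mul_sum]
  gcongr with i
  rw [norm_mul, mul_pow, mul_comm]
  gcongr
  exact hc i

theorem HilbertBasis.opNorm_le_of_apply_eq_smul (b : HilbertBasis ι 𝕜 E) {S : E →L[𝕜] F}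
    {v : ι → F} (hv : Orthonormal 𝕜 v) {c : ι → 𝕜} {M : ℝ} (hM : 0 ≤ M)
    (hc : ∀ i, ‖c i‖ ≤ M) (hS : ∀ i, S (b i) = c i • v i) : ‖S‖ ≤ M := by
  refine S.opNorm_le_bound hM fun x => ?_
  have hx : Tendsto (fun s => ∑ i ∈ s, b.repr x i • b i) atTop (𝓝 x) := b.hasSum_repr x
  refine le_of_tendsto_of_tendsto' ((S.continuous.tendsto x).comp hx).norm
    (hx.norm.const_mul M) fun s => ?_
  have hSs : S (∑ i ∈ s, b.repr x i • b i) = ∑ i ∈ s, (b.repr x i * c i) • v i := by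
    simp only [map_sum, map_smul, hS, smul_smul]
  simpa only [Function.comp_apply, hSs] using
    b.orthonormal.norm_sum_mul_smul_le hv hM hc (fun i => b.repr x i) s

theorem HilbertBasis.opNorm_eq_iSup_of_apply_eq_smul [Nonempty ι] (b : HilbertBasis ι 𝕜 E)
    {S : E →L[𝕜] F} {v : ι → F} (hv : Orthonormal 𝕜 v) {c : ι → 𝕜}
    (hc : BddAbove (Set.range fun i => ‖c i‖)) (hS : ∀ i, S (b i) = c i • v i) :
    ‖S‖ = ⨆ i, ‖c i‖ := by
  refine le_antisymm ?_ (ciSup_le fun i => ?_)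
  · exact b.opNorm_le_of_apply_eq_smul hv
      ((norm_nonneg _).trans (le_ciSup hc (Classical.arbitrary ι))) (le_ciSup hc) hS
  · simpa [hS, norm_smul, hv.norm_eq_one, b.orthonormal.norm_eq_one] using S.le_opNorm (b i)

theorem ContinuousLinearMap.pow_apply_eq_prod_smul {R M : Type*} [CommSemiring R]
    [TopologicalSpace M] [AddCommMonoid M] [Module R M] {T : M →L[R] M} {v : ι → M}
    {a : ι → R} {φ : ι → ι} (hT : ∀ i, T (v i) = a i • v (φ i)) (n : ℕ) (i : ι) :
    (T ^ n) (v i) = (∏ l ∈ range n, a (φ^[l] i)) • v (φ^[n] i) := by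
  induction n generalizing i with
  | zero => simp
  | succ n ih =>
    rw [pow_succ, mul_apply_eq_comp, hT, map_smul, ih, smul_smul, prod_range_succ',
      iterate_zero_apply]
    simp only [iterate_succ_apply, mul_comm]

end WeightedShift

theorem Finset.prod_range_succ_eq_prod_Icc {M : Type*} [CommMonoid M] (f : ℕ → M) (n : ℕ) :
    ∏ l ∈ range n, f (l + 1) = ∏ l ∈ Icc 1 n, f l := by
  rw [range_eq_Ico, prod_Ico_add' f 0 n 1, zero_add, Ico_add_one_right_eq_Icc]

theorem Real.iSup_exp_neg_mul_eq_exp_neg_mul_iInf {ι : Type*} [Nonempty ι] {ε : ℝ} (hε : 0 ≤ ε)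
    {W : ι → ℝ} (hW : BddBelow (Set.range W)) :
    ⨆ i, Real.exp (-(ε * W i)) = Real.exp (-(ε * ⨅ i, W i)) := by
  have hanti : Antitone fun s => Real.exp (-(ε * s)) := fun x y hxy => by
    simp only [Real.exp_le_exp, neg_le_neg_iff]
    exact mul_le_mul_of_nonneg_left hxy hε
  exact (hanti.map_ciInf_of_continuousAt (by fun_prop) hW).symm

namespace Matrix

variable {m R : Type*} [Fintype m] [DecidableEq m] [CommRing R]

theorem coe_iterate_subtypeMap_mulVec (A : Matrix m m R) {p : (m → R) → Prop}
    (h : ∀ k, p k → p (A *ᵥ k)) (l : ℕ) (k : Subtype p) :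
    ((Subtype.map A.mulVec h)^[l] k : m → R) = (A ^ l) *ᵥ k := by
  rw [(Semiconj.iterate_right (f := Subtype.val) (gb := A.mulVec) (fun _ => rfl) l).eq]
  induction l with
  | zero => simp
  | succ l ih => rw [iterate_succ_apply', ih, mulVec_mulVec, pow_succ']

theorem mulVec_ne_zero_of_isUnit {A : Matrix m m R} (hA : IsUnit A) {k : m → R} (hk : k ≠ 0) :
    A *ᵥ k ≠ 0 :=
  (mulVec_injective_of_isUnit hA).ne_iff' A.mulVec_zero |>.2 hk

theorem norm_pow_eq_iSup_prod_of_apply_hilbertBasis {𝕜 E : Type*} [RCLike 𝕜]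
    [NormedAddCommGroup E] [InnerProductSpace 𝕜 E] [Nonempty {k : m → R // k ≠ 0}]
    {A : Matrix m m R} (hA : IsUnit A) (b : HilbertBasis {k : m → R // k ≠ 0} 𝕜 E)
    {T : E →L[𝕜] E} {a : (m → R) → 𝕜}
    (hT : ∀ k (hk : k ≠ 0),
      T (b ⟨k, hk⟩) = a (A *ᵥ k) • b ⟨A *ᵥ k, mulVec_ne_zero_of_isUnit hA hk⟩)
    (n : ℕ) (ha : BddAbove (Set.range fun k : {k : m → R // k ≠ 0} =>
      ∏ l ∈ Icc 1 n, ‖a ((A ^ l) *ᵥ k)‖)) :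
    ‖T ^ n‖ = ⨆ k : {k : m → R // k ≠ 0}, ∏ l ∈ Icc 1 n, ‖a ((A ^ l) *ᵥ k)‖ := by
  obtain ⟨φ, hφ⟩ : ∃ φ : {k : m → R // k ≠ 0} → {k : m → R // k ≠ 0},
      ∀ l k, (φ^[l] k : m → R) = (A ^ l) *ᵥ k :=
    ⟨_, A.coe_iterate_subtypeMap_mulVec (p := (· ≠ 0)) fun _ => mulVec_ne_zero_of_isUnit hA⟩
  have hφn : Injective φ^[n] := fun k k' h => Subtype.ext <|
    mulVec_injective_of_isUnit (hA.pow n) (by rw [← hφ, ← hφ, h])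
  have hφ1 : ∀ k, φ k = ⟨A *ᵥ k, mulVec_ne_zero_of_isUnit hA k.2⟩ := fun k =>
    Subtype.ext (by simpa using hφ 1 k)
  have hTn := T.pow_apply_eq_prod_smul (v := b) (φ := φ) (a := fun k => a (A *ᵥ k))
    (fun k => by rw [hφ1]; exact hT k.1 k.2) n
  have hc : ∀ k, ‖∏ l ∈ range n, a (A *ᵥ (φ^[l] k : m → R))‖ =
      ∏ l ∈ Icc 1 n, ‖a ((A ^ l) *ᵥ k)‖ := fun k => by
    simp only [norm_prod, hφ, mulVec_mulVec, ← pow_succ']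
    exact prod_range_succ_eq_prod_Icc (fun l => ‖a ((A ^ l) *ᵥ k)‖) n
  rw [b.opNorm_eq_iSup_of_apply_eq_smul (b.orthonormal.comp _ hφn) (by simpa only [hc]) hTn]
  simp only [hc]

end Matrix

theorem norm_pow_noisy_koopman_toral_automorphism_general
    (d : ℕ) (hd : 0 < d) (A : Matrix (Fin d) (Fin d) ℤ)
    (hA : A.det = 1 ∨ A.det = -1)
    (ε α : ℝ) (hε : 0 < ε)
    {H : Type*} [NormedAddCommGroup H] [InnerProductSpace ℂ H]
    (b : HilbertBasis {k : Fin d → ℤ // k ≠ 0} ℂ H)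
    (T : H →L[ℂ] H)
    (hT : ∀ (k : Fin d → ℤ) (hk : k ≠ 0) (hk' : A.mulVec k ≠ 0),
      T (b ⟨k, hk⟩) =
        (Real.exp (-(ε * (∑ i, ((A.mulVec k i : ℤ) : ℝ) ^ 2) ^ α)) : ℂ) • b ⟨A.mulVec k, hk'⟩) :
    ∀ n : ℕ, 1 ≤ n →
      ‖T ^ n‖ = Real.exp (-(ε * sInf {s : ℝ | ∃ k : Fin d → ℤ, k ≠ 0 ∧
        s = ∑ l ∈ Finset.Icc 1 n, (∑ i, (((A ^ l).mulVec k i : ℤ) : ℝ) ^ 2) ^ α})) := by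
  intro n _
  have hAunit : IsUnit A := A.isUnit_iff_isUnit_det.2 (by rcases hA with h | h <;> simp [h])
  have : Nonempty {k : Fin d → ℤ // k ≠ 0} :=
    ⟨⟨fun _ => 1, fun h => one_ne_zero (congrFun h ⟨0, hd⟩)⟩⟩
  set W : {k : Fin d → ℤ // k ≠ 0} → ℝ := fun k =>
    ∑ l ∈ Icc 1 n, (∑ i, ((((A ^ l) *ᵥ k.1) i : ℤ) : ℝ) ^ 2) ^ α
  have hW0 : ∀ k, 0 ≤ W k := fun k => sum_nonneg fun l _ => by positivity
  have hnorm : ∀ k : {k : Fin d → ℤ // k ≠ 0}, ∏ l ∈ Icc 1 n,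
      ‖(Real.exp (-(ε * (∑ i, ((((A ^ l) *ᵥ k.1) i : ℤ) : ℝ) ^ 2) ^ α)) : ℂ)‖ =
      Real.exp (-(ε * W k)) := fun k => by
    simp only [Complex.norm_real, Real.norm_of_nonneg (Real.exp_pos _).le, ← Real.exp_sum, W,
      mul_sum, sum_neg_distrib]
  rw [norm_pow_eq_iSup_prod_of_apply_hilbertBasis hAunit b
    (a := fun v => (Real.exp (-(ε * (∑ i, ((v i : ℤ) : ℝ) ^ 2) ^ α)) : ℂ))
    (fun k hk => hT k hk _) n ?_]
  · simp only [hnorm]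
    rw [Real.iSup_exp_neg_mul_eq_exp_neg_mul_iInf hε.le ⟨0, by rintro _ ⟨k, rfl⟩; exact hW0 k⟩,
      iInf]
    congr 4
    ext s
    simp [W, eq_comm]
  · refine ⟨1, ?_⟩
    rintro _ ⟨k, rfl⟩
    exact (hnorm k).trans_le (Real.exp_le_one_iff.2 (neg_nonpos.2 (mul_nonneg hε.le (hW0 k))))

/-- the norm of `Tⁿ = (G_ε U_F)ⁿ` for a toral automorphism `A ∈ SL(d,ℤ)`
is `exp(-ε · min_{k≠0} Σ_{l=1}^n |Aˡ k|^{2α})`.  The space `L²₀(𝕋^d)` is modelled by a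
Hilbert space with an orthonormal basis indexed by the nonzero frequencies `k ∈ ℤ^d`,
on which `T` acts by `T e_k = e^{-ε|Ak|^{2α}} e_{Ak}`. -/
theorem norm_pow_noisy_koopman_toral_automorphism
    (d : ℕ) (hd : 0 < d) (A : Matrix (Fin d) (Fin d) ℤ)
    (hA : A.det = 1 ∨ A.det = -1)
    (ε α : ℝ) (hε : 0 < ε) (hα : 0 < α) (hα1 : α ≤ 1)
    {H : Type*} [NormedAddCommGroup H] [InnerProductSpace ℂ H] [CompleteSpace H]
    (b : HilbertBasis {k : Fin d → ℤ // k ≠ 0} ℂ H)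
    (T : H →L[ℂ] H)
    (hT : ∀ (k : Fin d → ℤ) (hk : k ≠ 0) (hk' : A.mulVec k ≠ 0),
      T (b ⟨k, hk⟩) =
        (Real.exp (-(ε * (∑ i, ((A.mulVec k i : ℤ) : ℝ) ^ 2) ^ α)) : ℂ) • b ⟨A.mulVec k, hk'⟩) :
    ∀ n : ℕ, 1 ≤ n →
      ‖T ^ n‖ = Real.exp (-(ε * sInf {s : ℝ | ∃ k : Fin d → ℤ, k ≠ 0 ∧
        s = ∑ l ∈ Finset.Icc 1 n, (∑ i, (((A ^ l).mulVec k i : ℤ) : ℝ) ^ 2) ^ α})) :=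
  norm_pow_noisy_koopman_toral_automorphism_general d hd A hA ε α hε b T hT
end

section
/- Let A ∈ SL(2,ℤ) be symmetric and hyperbolic with eigenvalues λ, λ^{-1}, |λ| > 1. Then min over nonzero k ∈ ℤ² of Σ_{l=-n}^{n} |A^l k|² equals Σ_{l=-n}^{n} |λ|^{2l}, where |·| is the Euclidean norm. -/
/-!
For symmetric `M` with `det M = 1` the quarter-turn rotation `J` satisfies `M J M = J`, so `J`
maps the `λ`-eigenvector `v` to a `λ⁻¹`-eigenvector `J v` orthogonal to it. Expanding in the
orthogonal basis `v, J v` gives `|Mˡ x|² |v|² = λ^{2l} (x ⬝ v)² + λ^{-2l} (x ⬝ J v)²`, and summing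
over the symmetric range `-n ≤ l ≤ n` makes both coefficients `∑ λ^{2l}`. Hence
`∑ₗ |Mˡ x|² = |x|² ∑ₗ λ^{2l}` for every `x`, and a nonzero integer vector has `|k|² ≥ 1`, with
equality at a basis vector.
-/

open Finset Matrix

theorem Finset.sum_Icc_comp_neg {M : Type*} [AddCommMonoid M] (f : ℤ → M) (n : ℤ) :
    ∑ l ∈ Icc (-n) n, f (-l) = ∑ l ∈ Icc (-n) n, f l :=
  sum_equiv (Equiv.neg ℤ) (by intro; simp; omega) (by simp)

namespace Matrix

section CommRing

variable {ι R : Type*} [Fintype ι] [CommRing R]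

theorem IsSymm.mulVec_dotProduct {M : Matrix ι ι R} (hM : M.IsSymm) (x y : ι → R) :
    M *ᵥ x ⬝ᵥ y = x ⬝ᵥ M *ᵥ y := by
  rw [dotProduct_mulVec, ← vecMul_transpose, hM.eq]

variable [DecidableEq ι]

theorem eq_zpow_of_add_one {M : Matrix ι ι R} (hM : IsUnit M.det) {B : ℤ → Matrix ι ι R}
    (h0 : B 0 = 1) (hsucc : ∀ l, B (l + 1) = M * B l) (l : ℤ) : B l = M ^ l := by
  induction l using Int.induction_on with
  | zero => simpa using h0
  | succ i ih => rw [hsucc, ih, zpow_add_one hM, (Commute.self_zpow M i).eq]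
  | pred i ih =>
    have h := hsucc (-i - 1)
    rw [sub_add_cancel, ih] at h
    rw [sub_eq_neg_add] at h ⊢
    rw [zpow_add hM, h, zpow_neg_one, ← mul_assoc, nonsing_inv_mul _ hM, one_mul]

def quarterTurn : Matrix (Fin 2) (Fin 2) R := !![0, -1; 1, 0]

theorem transpose_mul_quarterTurn_mul (M : Matrix (Fin 2) (Fin 2) R) :
    Mᵀ * quarterTurn * M = M.det • quarterTurn := by
  ext i j
  fin_cases i <;> fin_cases j <;>
    simp only [Fin.zero_eta, Fin.mk_one, Fin.isValue, quarterTurn, mul_apply, transpose_apply,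
      of_apply, det_fin_two, smul_apply, smul_eq_mul, Fin.sum_univ_two, cons_val',
      cons_val_fin_one, cons_val_zero, cons_val_one] <;>
    ring

theorem dotProduct_self_mul_dotProduct_self (x v : Fin 2 → R) :
    (x ⬝ᵥ x) * (v ⬝ᵥ v) = (x ⬝ᵥ v) ^ 2 + (x ⬝ᵥ quarterTurn *ᵥ v) ^ 2 := by
  simp only [dotProduct, mulVec, quarterTurn, of_apply, Fin.sum_univ_two, cons_val',
    cons_val_fin_one, cons_val_zero, cons_val_one]
  ring

theorem IsSymm.smul_mulVec_quarterTurn_mulVec {M : Matrix (Fin 2) (Fin 2) R} (hM : M.IsSymm)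
    (hdet : M.det = 1) {t : R} {v : Fin 2 → R} (hv : M *ᵥ v = t • v) :
    t • M *ᵥ quarterTurn *ᵥ v = quarterTurn *ᵥ v := by
  have h := congrArg (· *ᵥ v) (transpose_mul_quarterTurn_mul M)
  simp only [hM.eq, hdet, one_smul, ← mulVec_mulVec, hv, mulVec_smul] at h
  exact h

end CommRing

theorem zpow_mulVec_of_mulVec_eq_smul {ι K : Type*} [Fintype ι] [DecidableEq ι] [Field K]
    {M : Matrix ι ι K} (hM : IsUnit M.det) {t : K} (ht : t ≠ 0) {v : ι → K}
    (hv : M *ᵥ v = t • v) (l : ℤ) : M ^ l *ᵥ v = t ^ l • v := by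
  have hinv : M⁻¹ *ᵥ v = t⁻¹ • v := by
    rw [eq_inv_smul_iff₀ ht, ← mulVec_smul, ← hv, mulVec_mulVec, nonsing_inv_mul _ hM, one_mulVec]
  induction l using Int.induction_on with
  | zero => simp
  | succ i ih =>
    rw [zpow_add_one hM, ← mulVec_mulVec, hv, mulVec_smul, ih, smul_smul, zpow_add_one₀ ht,
      mul_comm]
  | pred i ih =>
    rw [zpow_sub_one hM, ← mulVec_mulVec, hinv, mulVec_smul, ih, smul_smul, zpow_sub_one₀ ht,
      mul_comm]

theorem IsSymm.sum_Icc_zpow_mulVec_dotProduct_self {K : Type*} [Field K] [LinearOrder K]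
    [IsStrictOrderedRing K] {M : Matrix (Fin 2) (Fin 2) K} (hM : M.IsSymm) (hdet : M.det = 1)
    {t : K} {v : Fin 2 → K} (hv0 : v ≠ 0) (hv : M *ᵥ v = t • v) (n : ℤ) (x : Fin 2 → K) :
    ∑ l ∈ Icc (-n) n, M ^ l *ᵥ x ⬝ᵥ M ^ l *ᵥ x = (∑ l ∈ Icc (-n) n, (t ^ l) ^ 2) * (x ⬝ᵥ x) := by
  set w := quarterTurn *ᵥ v
  have hw0 : w ≠ 0 := by
    contrapose! hv0
    simpa [w, quarterTurn, funext_iff, Fin.forall_fin_two, and_comm] using hv0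
  have htw : t • M *ᵥ w = w := hM.smul_mulVec_quarterTurn_mulVec hdet hv
  have ht : t ≠ 0 := by
    rintro rfl
    rw [zero_smul] at htw
    exact hw0 htw.symm
  have hw : M *ᵥ w = t⁻¹ • w := (eq_inv_smul_iff₀ ht).mpr htw
  have hu : IsUnit M.det := by simp [hdet]
  have hpow (l : ℤ) : (M ^ l *ᵥ x ⬝ᵥ M ^ l *ᵥ x) * (v ⬝ᵥ v) =
      (t ^ l) ^ 2 * (x ⬝ᵥ v) ^ 2 + (t ^ (-l)) ^ 2 * (x ⬝ᵥ w) ^ 2 := by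
    rw [dotProduct_self_mul_dotProduct_self, (hM.zpow l).mulVec_dotProduct,
      (hM.zpow l).mulVec_dotProduct, zpow_mulVec_of_mulVec_eq_smul hu ht hv,
      zpow_mulVec_of_mulVec_eq_smul hu (inv_ne_zero ht) hw, dotProduct_smul, dotProduct_smul,
      _root_.inv_zpow', smul_eq_mul, smul_eq_mul, mul_pow, mul_pow]
  apply mul_right_cancel₀ (dotProduct_self_eq_zero.not.mpr hv0)
  rw [sum_mul, sum_congr rfl fun l _ => hpow l, sum_add_distrib, ← sum_mul, ← sum_mul,
    sum_Icc_comp_neg (fun l => (t ^ l) ^ 2), mul_assoc, dotProduct_self_mul_dotProduct_self]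
  ring

end Matrix

theorem Int.one_le_dotProduct_self {ι : Type*} [Fintype ι] {k : ι → ℤ} (hk : k ≠ 0) :
    1 ≤ k ⬝ᵥ k := by
  have h0 : 0 ≤ k ⬝ᵥ k := sum_nonneg fun i _ => mul_self_nonneg (k i)
  have h1 : k ⬝ᵥ k ≠ 0 := dotProduct_self_eq_zero.not.mpr hk
  omega

theorem isLeast_mul_dotProduct_self_intCast {ι K : Type*} [Fintype ι] [DecidableEq ι] [Ring K]
    [LinearOrder K] [IsStrictOrderedRing K] (i : ι) {c : K} (hc : 0 ≤ c) :
    IsLeast {s | ∃ k : ι → ℤ, k ≠ 0 ∧ s = c * ((fun j => (k j : K)) ⬝ᵥ fun j => (k j : K))} c := by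
  have hcast (k : ι → ℤ) : (fun j => (k j : K)) ⬝ᵥ (fun j => (k j : K)) = ((k ⬝ᵥ k : ℤ) : K) := by
    simp [dotProduct]
  refine ⟨⟨Pi.single i 1, fun h => by simpa using congrFun h i, by simp [hcast]⟩, ?_⟩
  rintro _ ⟨k, hk, rfl⟩
  rw [hcast]
  exact le_mul_of_one_le_right hc (by exact_mod_cast Int.one_le_dotProduct_self hk)

theorem arithmetic_min_symmetric_cat_map_general
    (A : Matrix (Fin 2) (Fin 2) ℤ) (hdet : A.det = 1) (hsymm : A.IsSymm)
    (B : ℤ → Matrix (Fin 2) (Fin 2) ℝ)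
    (hB0 : B 0 = 1)
    (hBrec : ∀ l : ℤ, B (l + 1) = A.map (Int.cast : ℤ → ℝ) * B l)
    (lam : ℝ)
    (heig : ∃ v : Fin 2 → ℝ, v ≠ 0 ∧ (A.map (Int.cast : ℤ → ℝ)).mulVec v = lam • v)
    (n : ℕ) :
    sInf {s : ℝ | ∃ k : Fin 2 → ℤ, k ≠ 0 ∧
        s = ∑ l ∈ Finset.Icc (-(n : ℤ)) (n : ℤ),
              ∑ i, ((B l).mulVec (fun j => ((k j : ℤ) : ℝ)) i) ^ 2} =
      ∑ l ∈ Finset.Icc (-(n : ℤ)) (n : ℤ), |lam| ^ (2 * l) := by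
  obtain ⟨v, hv0, hv⟩ := heig
  have hdetR : (A.map (Int.cast : ℤ → ℝ)).det = 1 := by rw [← Int.cast_det, hdet, Int.cast_one]
  have hB (l : ℤ) : B l = A.map (Int.cast : ℤ → ℝ) ^ l :=
    eq_zpow_of_add_one (by simp [hdetR]) hB0 hBrec l
  have hsum (x : Fin 2 → ℝ) : ∑ l ∈ Icc (-(n : ℤ)) n, ∑ i, (B l *ᵥ x) i ^ 2 =
      (∑ l ∈ Icc (-(n : ℤ)) n, |lam| ^ (2 * l)) * (x ⬝ᵥ x) := by
    have habs (l : ℤ) : |lam| ^ (2 * l) = (lam ^ l) ^ 2 := by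
      rw [Even.zpow_abs ⟨l, two_mul l⟩, mul_comm, _root_.zpow_mul, zpow_two, sq]
    simp only [habs, ← (hsymm.map _).sum_Icc_zpow_mulVec_dotProduct_self hdetR hv0 hv]
    simp only [hB, dotProduct, sq]
  simp only [hsum]
  exact (isLeast_mul_dotProduct_self_intCast 0 (sum_nonneg fun l _ => by positivity)).csInf_eq

/-- for a symmetric hyperbolic `A ∈ SL(2,ℤ)` with eigenvalue `λ`, `|λ| > 1`,
the minimum over nonzero integer vectors of `Σ_{l=-n}^{n} |Aˡ k|²` equals
`Σ_{l=-n}^{n} |λ|^{2l}`.  Here `B : ℤ → Matrix` encodes the (integer) powers `Aˡ`. -/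
theorem arithmetic_min_symmetric_cat_map
    (A : Matrix (Fin 2) (Fin 2) ℤ) (hdet : A.det = 1) (hsymm : A.IsSymm)
    (htr : 2 < |Matrix.trace A|)
    (B : ℤ → Matrix (Fin 2) (Fin 2) ℝ)
    (hB0 : B 0 = 1)
    (hBrec : ∀ l : ℤ, B (l + 1) = A.map (Int.cast : ℤ → ℝ) * B l)
    (lam : ℝ) (hlam : 1 < |lam|)
    (heig : ∃ v : Fin 2 → ℝ, v ≠ 0 ∧ (A.map (Int.cast : ℤ → ℝ)).mulVec v = lam • v)
    (n : ℕ) :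
    sInf {s : ℝ | ∃ k : Fin 2 → ℤ, k ≠ 0 ∧
        s = ∑ l ∈ Finset.Icc (-(n : ℤ)) (n : ℤ),
              ∑ i, ((B l).mulVec (fun j => ((k j : ℤ) : ℝ)) i) ^ 2} =
      ∑ l ∈ Finset.Icc (-(n : ℤ)) (n : ℤ), |lam| ^ (2 * l) :=
  arithmetic_min_symmetric_cat_map_general A hdet hsymm B hB0 hBrec lam heig n
end

section
/- Let A ∈ SL(d,ℤ) be hyperbolic symmetric in dimension 2 with entropy h(A) = ln|λ|, |λ|>1. Then there exist constants C₁, C₂ > 0 such that C₁ e^{h(A)n} ≤ min over nonzero k ∈ ℤ² of Σ_{l=1}^n |A^l k|² ≤ C₂ e^{h(A)n} for all n ≥ 1. -/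
/-!
Let `μ = λ⁻¹` and `t = tr A`. Since `A` is symmetric with `A² = tA - 1`, every real vector
splits as `w = p + q` with `p ⊥ q`, `Ap = λp`, `Aq = μq`, so `|Aˡ w|² = λ²ˡ|p|² + μ²ˡ|q|²`.
For a nonzero integer vector `k`, `(λ - μ)² |p|²|q|²` equals `-(m² - tms + s²)` with `m = k·k`,
`s = k·Ak`; this integer is nonzero because `t² - 4` is not a square, hence at least `1`.
Keeping only the terms `l = n` and `l = 1` and applying AM-GM gives the lower bound. For the
upper bound take `k = A^{-⌈n/2⌉} e₁`: the sum then runs over `Aʲ e₁` with `|j| ≤ n/2`, i.e. two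
geometric series of size `|λ|ⁿ`.
-/

open Matrix Finset

namespace Matrix

theorem mul_self_eq_trace_smul_sub_det_smul_one {R : Type*} [CommRing R]
    (M : Matrix (Fin 2) (Fin 2) R) : M * M = M.trace • M - M.det • 1 := by
  ext i j
  fin_cases i <;> fin_cases j <;> simp [mul_apply, trace_fin_two, det_fin_two] <;> ring

variable {ι K : Type*} [Fintype ι]

section CommRing

variable [CommRing K] {M : Matrix ι ι K} {p q : ι → K} {a b : K}

theorem smul_add_smul_dotProduct_smul_add_smul (hpq : p ⬝ᵥ q = 0) (a b c d : K) :
    (a • p + b • q) ⬝ᵥ (c • p + d • q) = a * c * (p ⬝ᵥ p) + b * d * (q ⬝ᵥ q) := by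
  simp only [add_dotProduct, dotProduct_add, smul_dotProduct, dotProduct_smul, smul_eq_mul,
    dotProduct_comm q p, hpq]
  ring

theorem dotProduct_eq_zero_of_isSymm [IsDomain K] (hM : M.IsSymm) (hp : M *ᵥ p = a • p)
    (hq : M *ᵥ q = b • q) (hab : a ≠ b) : p ⬝ᵥ q = 0 := by
  have h : (M *ᵥ p) ⬝ᵥ q = p ⬝ᵥ (M *ᵥ q) := by
    rw [dotProduct_mulVec, ← mulVec_transpose, hM.eq]
  rw [hp, hq, smul_dotProduct, dotProduct_smul, smul_eq_mul, smul_eq_mul] at h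
  by_contra hpq
  exact hab (mul_right_cancel₀ hpq h)

theorem pow_mulVec_of_mulVec_eq_smul [DecidableEq ι] (h : M *ᵥ p = a • p) (l : ℕ) :
    (M ^ l) *ᵥ p = a ^ l • p := by
  induction l with
  | zero => simp
  | succ l ih => rw [pow_succ', ← mulVec_mulVec, ih, mulVec_smul, h, smul_smul, pow_succ]

end CommRing

section Field

variable [Field K] [DecidableEq ι] {M : Matrix ι ι K} {p : ι → K} {a b : K}

theorem adjugate_mulVec_of_mulVec_eq_smul (hdet : M.det = 1) (h : M *ᵥ p = a • p)
    (ha : a ≠ 0) : M.adjugate *ᵥ p = a⁻¹ • p := by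
  rw [eq_inv_smul_iff₀ ha, ← mulVec_smul, ← h, mulVec_mulVec, adjugate_mul, hdet, one_smul,
    one_mulVec]

theorem pow_mul_adjugate_pow_mulVec (hdet : M.det = 1) (h : M *ᵥ p = a • p) (ha : a ≠ 0)
    (l m : ℕ) : (M ^ l * adjugate (M ^ m)) *ᵥ p = (a ^ l * a⁻¹ ^ m) • p := by
  rw [← mulVec_mulVec, adjugate_mulVec_of_mulVec_eq_smul (by rw [det_pow, hdet, one_pow])
    (pow_mulVec_of_mulVec_eq_smul h m) (pow_ne_zero m ha), mulVec_smul,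
    pow_mulVec_of_mulVec_eq_smul h l, smul_smul, inv_pow, mul_comm]

theorem exists_eq_add_of_mul_self_eq (hab : a ≠ b) (hM : M * M = (a + b) • M - (a * b) • 1)
    (w : ι → K) : ∃ p q, w = p + q ∧ M *ᵥ p = a • p ∧ M *ᵥ q = b • q := by
  have hMM : M *ᵥ (M *ᵥ w) = (a + b) • M *ᵥ w - (a * b) • w := by
    rw [mulVec_mulVec, hM, sub_mulVec, smul_mulVec, smul_mulVec, one_mulVec]
  have hab' : a - b ≠ 0 := sub_ne_zero.mpr hab
  -- the spectral projections `(M - b)/(a - b)` and `(a - M)/(a - b)` applied to `w`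
  refine ⟨(a - b)⁻¹ • (M *ᵥ w - b • w), (a - b)⁻¹ • (a • w - M *ᵥ w), ?_, ?_, ?_⟩
  · rw [← smul_add, sub_add_sub_cancel', ← sub_smul, inv_smul_smul₀ hab']
  · rw [mulVec_smul, mulVec_sub, mulVec_smul, hMM, smul_comm a]
    congr 1
    module
  · rw [mulVec_smul, mulVec_sub, mulVec_smul, hMM, smul_comm b]
    congr 1
    module

variable {M : Matrix (Fin 2) (Fin 2) K} {v : Fin 2 → K} {lam : K}

theorem trace_eq_add_inv_of_mulVec_eq_smul (hdet : M.det = 1) (hv : v ≠ 0)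
    (hMv : M *ᵥ v = lam • v) : M.trace = lam + lam⁻¹ := by
  have hchar : (lam * lam - M.trace * lam + 1) • v = 0 := by
    have := congr_arg (· *ᵥ v) M.mul_self_eq_trace_smul_sub_det_smul_one
    simp only [← mulVec_mulVec, sub_mulVec, smul_mulVec, hMv, mulVec_smul, hdet, one_smul,
      one_mulVec] at this
    linear_combination (norm := module) this
  have hlam : lam * lam - M.trace * lam + 1 = 0 := (smul_eq_zero.mp hchar).resolve_right hv
  have hlam0 : lam ≠ 0 := by rintro rfl; simp at hlam
  field_simp
  linear_combination -hlam

theorem IsSymm.exists_eq_add_orthogonal_eigenvectors (hM : M.IsSymm) (hdet : M.det = 1)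
    (hv : v ≠ 0) (hMv : M *ᵥ v = lam • v) (hlam : lam ≠ lam⁻¹) (w : Fin 2 → K) :
    ∃ p q, w = p + q ∧ M *ᵥ p = lam • p ∧ M *ᵥ q = lam⁻¹ • q ∧ p ⬝ᵥ q = 0 := by
  have hlam0 : lam ≠ 0 := by rintro rfl; simp at hlam
  have hMM : M * M = (lam + lam⁻¹) • M - (lam * lam⁻¹) • 1 := by
    rw [M.mul_self_eq_trace_smul_sub_det_smul_one,
      trace_eq_add_inv_of_mulVec_eq_smul hdet hv hMv, hdet, mul_inv_cancel₀ hlam0]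
  obtain ⟨p, q, hw, hp, hq⟩ := exists_eq_add_of_mul_self_eq hlam hMM w
  exact ⟨p, q, hw, hp, hq, dotProduct_eq_zero_of_isSymm hM hp hq hlam⟩

end Field

end Matrix

theorem Int.not_isSquare_sq_sub_four {t : ℤ} (ht : 2 < |t|) : ¬IsSquare (t ^ 2 - 4) := by
  rintro ⟨d, hd⟩
  have hdt : |d| < |t| := sq_lt_sq.mp (by nlinarith)
  nlinarith [sq_abs d, sq_abs t, abs_nonneg d]

theorem Int.sq_sub_mul_mul_add_sq_ne_zero {t m : ℤ} (ht : 2 < |t|) (hm : m ≠ 0) (s : ℤ) :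
    m ^ 2 - t * m * s + s ^ 2 ≠ 0 := by
  intro h
  have hsq : (2 * s - t * m) ^ 2 = (t ^ 2 - 4) * m ^ 2 := by linear_combination 4 * h
  obtain ⟨d, hd⟩ : m ∣ 2 * s - t * m :=
    (Int.pow_dvd_pow_iff two_ne_zero).mp ⟨t ^ 2 - 4, by rw [hsq, mul_comm]⟩
  refine Int.not_isSquare_sq_sub_four ht ⟨d, mul_left_cancel₀ (pow_ne_zero 2 hm) ?_⟩
  rw [← mul_comm (t ^ 2 - 4), ← hsq, hd]
  ring

theorem one_le_sub_inv_sq_mul_mul {t m s : ℤ} (ht : 2 < |t|) (hm : m ≠ 0) {lam P Q : ℝ}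
    (hP : 0 ≤ P) (hQ : 0 ≤ Q) (htr : (t : ℝ) = lam + lam⁻¹)
    (hmPQ : (m : ℝ) = P + Q) (hsPQ : (s : ℝ) = lam * P + lam⁻¹ * Q) (hlam : lam ≠ 0) :
    1 ≤ (lam - lam⁻¹) ^ 2 * (P * Q) := by
  have hform : (lam - lam⁻¹) ^ 2 * (P * Q) = -((m ^ 2 - t * m * s + s ^ 2 : ℤ) : ℝ) := by
    push_cast
    rw [htr, hmPQ, hsPQ]
    field_simp
    ring
  have hN : 0 ≤ -(m ^ 2 - t * m * s + s ^ 2) := by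
    exact_mod_cast hform ▸ (by positivity : (0 : ℝ) ≤ (lam - lam⁻¹) ^ 2 * (P * Q))
  have hN0 := Int.sq_sub_mul_mul_add_sq_ne_zero ht hm s
  rw [hform]
  exact_mod_cast (by omega : (1 : ℤ) ≤ -(m ^ 2 - t * m * s + s ^ 2))

theorem le_csInf_and_csInf_le {α β : Type*} [ConditionallyCompleteLattice β] {p : α → Prop}
    {f : α → β} {a b : β} (hlow : ∀ x, p x → a ≤ f x) (hup : ∃ x, p x ∧ f x ≤ b) :
    a ≤ sInf {s | ∃ x, p x ∧ s = f x} ∧ sInf {s | ∃ x, p x ∧ s = f x} ≤ b := by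
  obtain ⟨x, hx, hxb⟩ := hup
  have hlb : a ∈ lowerBounds {s | ∃ x, p x ∧ s = f x} := by
    rintro _ ⟨y, hy, rfl⟩
    exact hlow y hy
  exact ⟨le_csInf ⟨f x, x, hx, rfl⟩ hlb, (csInf_le ⟨a, hlb⟩ ⟨x, hx, rfl⟩).trans hxb⟩

theorem two_mul_div_mul_pow_le_sum_Icc {L P Q c : ℝ} (hP : 0 ≤ P) (hQ : 0 ≤ Q)
    (hPQ : c ^ 2 ≤ P * Q) {n : ℕ} (hn : 1 ≤ n) :
    2 * c / L * L ^ n ≤ ∑ l ∈ Icc 1 n, ((L ^ l) ^ 2 * P + (L⁻¹ ^ l) ^ 2 * Q) := by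
  set X := (L ^ n) ^ 2 * P
  set Y := (L⁻¹ ^ 1) ^ 2 * Q
  have hX : 0 ≤ X := by positivity
  have hY : 0 ≤ Y := by positivity
  have hXY : (2 * c / L * L ^ n) ^ 2 ≤ 4 * (X * Y) := by
    have := mul_le_mul_of_nonneg_right hPQ (by positivity : 0 ≤ (L ^ n) ^ 2 * (L⁻¹ ^ 1) ^ 2)
    calc _ = 4 * c ^ 2 * ((L ^ n) ^ 2 * (L⁻¹ ^ 1) ^ 2) := by ring
      _ ≤ 4 * (X * Y) := by linarith
  have hsum : X + Y ≤ ∑ l ∈ Icc 1 n, ((L ^ l) ^ 2 * P + (L⁻¹ ^ l) ^ 2 * Q) := by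
    rw [sum_add_distrib]
    exact add_le_add
      (single_le_sum (f := fun l => (L ^ l) ^ 2 * P) (fun _ _ => by positivity)
        (mem_Icc.mpr ⟨hn, le_rfl⟩))
      (single_le_sum (f := fun l => (L⁻¹ ^ l) ^ 2 * Q) (fun _ _ => by positivity)
        (mem_Icc.mpr ⟨le_rfl, hn⟩))
  nlinarith [sq_nonneg (X - Y)]

theorem sum_Icc_pow_le {y : ℝ} (hy : 1 < y) (n : ℕ) :
    ∑ l ∈ Icc 1 n, y ^ l ≤ y ^ (n + 1) / (y - 1) := by
  rw [← Ico_add_one_right_eq_Icc, geom_sum_Ico hy.ne' (by omega)]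
  gcongr
  linarith

theorem sum_Icc_inv_pow_le {y : ℝ} (hy : 1 < y) (n : ℕ) :
    ∑ l ∈ Icc 1 n, y⁻¹ ^ l ≤ 1 / (y - 1) := by
  have hy0 : 0 < y := zero_lt_one.trans hy
  rw [← Ico_add_one_right_eq_Icc]
  refine (geom_sum_Ico_le_of_lt_one (inv_nonneg.mpr hy0.le) (inv_lt_one_of_one_lt₀ hy)).trans_eq ?_
  field_simp

theorem sum_Icc_pow_mul_inv_pow_le {L P Q : ℝ} (hL : 1 < L) (hP : 0 ≤ P) (hQ : 0 ≤ Q)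
    (hPQ : P + Q = 1) (n : ℕ) :
    ∑ l ∈ Icc 1 n, ((L ^ l * L⁻¹ ^ ((n + 1) / 2)) ^ 2 * P +
        (L⁻¹ ^ l * L ^ ((n + 1) / 2)) ^ 2 * Q) ≤ 2 * L ^ 2 / (L ^ 2 - 1) * L ^ n := by
  set m := (n + 1) / 2
  have hy : 1 < L ^ 2 := one_lt_pow₀ hL two_ne_zero
  have hterm : ∀ l, (L ^ l * L⁻¹ ^ m) ^ 2 * P + (L⁻¹ ^ l * L ^ m) ^ 2 * Q ≤
      (L ^ 2)⁻¹ ^ m * (L ^ 2) ^ l + (L ^ 2) ^ m * (L ^ 2)⁻¹ ^ l := by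
    intro l
    rw [show (L ^ l * L⁻¹ ^ m) ^ 2 = (L ^ 2)⁻¹ ^ m * (L ^ 2) ^ l by ring,
      show (L⁻¹ ^ l * L ^ m) ^ 2 = (L ^ 2) ^ m * (L ^ 2)⁻¹ ^ l by ring]
    have h1 : 0 ≤ (L ^ 2)⁻¹ ^ m * (L ^ 2) ^ l := by positivity
    have h2 : 0 ≤ (L ^ 2) ^ m * (L ^ 2)⁻¹ ^ l := by positivity
    nlinarith
  have hforward : (L ^ 2)⁻¹ ^ m * (L ^ 2) ^ (n + 1) ≤ L ^ 2 * L ^ n := by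
    rw [inv_pow, inv_mul_le_iff₀ (by positivity), ← pow_mul, ← pow_mul, ← pow_add, ← pow_add]
    exact pow_le_pow_right₀ hL.le (by omega)
  have hbackward : (L ^ 2) ^ m ≤ L ^ 2 * L ^ n := by
    rw [← pow_mul, ← pow_add]
    exact pow_le_pow_right₀ hL.le (by omega)
  have hy1 : 0 < L ^ 2 - 1 := by linarith
  calc _ ≤ ∑ l ∈ Icc 1 n, ((L ^ 2)⁻¹ ^ m * (L ^ 2) ^ l + (L ^ 2) ^ m * (L ^ 2)⁻¹ ^ l) :=
        sum_le_sum fun l _ => hterm l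
    _ = (L ^ 2)⁻¹ ^ m * ∑ l ∈ Icc 1 n, (L ^ 2) ^ l +
        (L ^ 2) ^ m * ∑ l ∈ Icc 1 n, (L ^ 2)⁻¹ ^ l := by
        rw [sum_add_distrib, mul_sum, mul_sum]
    _ ≤ (L ^ 2)⁻¹ ^ m * ((L ^ 2) ^ (n + 1) / (L ^ 2 - 1)) +
        (L ^ 2) ^ m * (1 / (L ^ 2 - 1)) := by
        gcongr
        exacts [sum_Icc_pow_le hy n, sum_Icc_inv_pow_le hy n]
    _ ≤ L ^ 2 * L ^ n / (L ^ 2 - 1) + L ^ 2 * L ^ n / (L ^ 2 - 1) := by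
        rw [← mul_div_assoc, mul_one_div]
        gcongr
    _ = 2 * L ^ 2 / (L ^ 2 - 1) * L ^ n := by ring

theorem ne_inv_of_one_lt_abs {lam : ℝ} (hlam : 1 < |lam|) : lam ≠ lam⁻¹ := fun h =>
  (inv_lt_one_of_one_lt₀ hlam).not_ge (by rw [← abs_inv, ← h]; exact hlam.le)

section HyperbolicSymmetric

variable {A : Matrix (Fin 2) (Fin 2) ℤ} {lam : ℝ}

theorem intCast_trace_eq_add_inv (hdet : A.det = 1)
    (heig : ∃ v : Fin 2 → ℝ, v ≠ 0 ∧ (A.map (Int.cast : ℤ → ℝ)).mulVec v = lam • v) :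
    ((A.trace : ℤ) : ℝ) = lam + lam⁻¹ := by
  obtain ⟨v, hv, hAv⟩ := heig
  have hBdet : (A.map (Int.cast : ℤ → ℝ)).det = 1 := by
    simpa [hdet] using ((Int.castRingHom ℝ).map_det A).symm
  exact (AddMonoidHom.map_trace (Int.castRingHom ℝ) A).trans
    (trace_eq_add_inv_of_mulVec_eq_smul hBdet hv hAv)

/-- `P` and `Q` are the squared lengths of the components of `k` along the two eigenlines;
`adjugate (A ^ m)` is `A ^ (-m)`. -/
theorem exists_sum_sq_pow_mul_adjugate_pow_mulVec_eq (hdet : A.det = 1) (hsymm : A.IsSymm)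
    (hlam : 1 < |lam|)
    (heig : ∃ v : Fin 2 → ℝ, v ≠ 0 ∧ (A.map (Int.cast : ℤ → ℝ)).mulVec v = lam • v)
    (k : Fin 2 → ℤ) :
    ∃ P Q : ℝ, 0 ≤ P ∧ 0 ≤ Q ∧ ((k ⬝ᵥ k : ℤ) : ℝ) = P + Q ∧
      ((k ⬝ᵥ A *ᵥ k : ℤ) : ℝ) = lam * P + lam⁻¹ * Q ∧
      ∀ l m : ℕ, ∑ i, ((((A ^ l * adjugate (A ^ m)) *ᵥ k) i : ℤ) : ℝ) ^ 2 =
        (|lam| ^ l * |lam|⁻¹ ^ m) ^ 2 * P + (|lam|⁻¹ ^ l * |lam| ^ m) ^ 2 * Q := by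
  set f := Int.castRingHom ℝ
  set B := f.mapMatrix A
  obtain ⟨v, hv, hBv⟩ := heig
  have hB : B.IsSymm := hsymm.map _
  have hBdet : B.det = 1 := by rw [← f.map_det, hdet, map_one]
  have hlam0 : lam ≠ 0 := abs_pos.mp (zero_lt_one.trans hlam)
  obtain ⟨p, q, hw, hp, hq, hpq⟩ :=
    hB.exists_eq_add_orthogonal_eigenvectors hBdet hv hBv (ne_inv_of_one_lt_abs hlam) (f ∘ k)
  have hvec : ∀ M, f ∘ (M *ᵥ k) = f.mapMatrix M *ᵥ (p + q) := fun M => by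
    rw [← hw]
    exact funext (f.map_mulVec M k)
  refine ⟨p ⬝ᵥ p, q ⬝ᵥ q, dotProduct_self_star_nonneg p, dotProduct_self_star_nonneg q, ?_, ?_,
    fun l m => ?_⟩
  · change f (k ⬝ᵥ k) = _
    rw [f.map_dotProduct, hw]
    simpa using smul_add_smul_dotProduct_smul_add_smul hpq 1 1 1 1
  · change f (k ⬝ᵥ A *ᵥ k) = _
    rw [f.map_dotProduct, hw, hvec, mulVec_add, hp, hq]
    simpa using smul_add_smul_dotProduct_smul_add_smul hpq 1 1 lam lam⁻¹
  · have hM : f.mapMatrix (A ^ l * adjugate (A ^ m)) = B ^ l * adjugate (B ^ m) := by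
      rw [map_mul, map_pow, f.map_adjugate, map_pow]
    have hsq : ∀ x : Fin 2 → ℝ, ∑ i, x i ^ 2 = x ⬝ᵥ x := fun x => by simp [dotProduct, sq]
    refine (hsq (f ∘ ((A ^ l * adjugate (A ^ m)) *ᵥ k))).trans ?_
    rw [hvec, hM, mulVec_add, pow_mul_adjugate_pow_mulVec hBdet hp hlam0,
      pow_mul_adjugate_pow_mulVec hBdet hq (inv_ne_zero hlam0), inv_inv,
      smul_add_smul_dotProduct_smul_add_smul hpq, ← abs_mul_abs_self (lam ^ l * _),
      ← abs_mul_abs_self (lam⁻¹ ^ l * _)]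
    simp only [abs_mul, abs_pow, abs_inv]
    ring

theorem le_sum_Icc_sum_sq_pow_mulVec (hdet : A.det = 1) (hsymm : A.IsSymm)
    (htr : 2 < |A.trace|) (hlam : 1 < |lam|)
    (heig : ∃ v : Fin 2 → ℝ, v ≠ 0 ∧ (A.map (Int.cast : ℤ → ℝ)).mulVec v = lam • v)
    {k : Fin 2 → ℤ} (hk : k ≠ 0) {n : ℕ} (hn : 1 ≤ n) :
    2 * |lam - lam⁻¹|⁻¹ / |lam| * |lam| ^ n ≤
      ∑ l ∈ Icc 1 n, ∑ i, ((((A ^ l) *ᵥ k) i : ℤ) : ℝ) ^ 2 := by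
  obtain ⟨P, Q, hP, hQ, hmPQ, hsPQ, hsum⟩ :=
    exists_sum_sq_pow_mul_adjugate_pow_mulVec_eq hdet hsymm hlam heig k
  have hPQ := one_le_sub_inv_sq_mul_mul htr (dotProduct_self_eq_zero.not.mpr hk) hP hQ
    (intCast_trace_eq_add_inv hdet heig) hmPQ hsPQ (abs_pos.mp (zero_lt_one.trans hlam))
  have hc : |lam - lam⁻¹|⁻¹ ^ 2 ≤ P * Q := by
    have hgap : lam - lam⁻¹ ≠ 0 := sub_ne_zero.mpr (ne_inv_of_one_lt_abs hlam)
    rwa [inv_pow, sq_abs, inv_le_iff_one_le_mul₀' (by positivity)]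
  have hterm : ∀ l, ∑ i, ((((A ^ l) *ᵥ k) i : ℤ) : ℝ) ^ 2 =
      (|lam| ^ l) ^ 2 * P + (|lam|⁻¹ ^ l) ^ 2 * Q := fun l => by
    simpa using hsum l 0
  simp_rw [hterm]
  exact two_mul_div_mul_pow_le_sum_Icc hP hQ hc hn

theorem exists_sum_Icc_sum_sq_pow_mulVec_le (hdet : A.det = 1) (hsymm : A.IsSymm)
    (hlam : 1 < |lam|)
    (heig : ∃ v : Fin 2 → ℝ, v ≠ 0 ∧ (A.map (Int.cast : ℤ → ℝ)).mulVec v = lam • v) (n : ℕ) :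
    ∃ k : Fin 2 → ℤ, k ≠ 0 ∧ ∑ l ∈ Icc 1 n, ∑ i, ((((A ^ l) *ᵥ k) i : ℤ) : ℝ) ^ 2 ≤
      2 * |lam| ^ 2 / (|lam| ^ 2 - 1) * |lam| ^ n := by
  set e : Fin 2 → ℤ := Pi.single 0 1
  obtain ⟨P, Q, hP, hQ, hPQ, -, hsum⟩ :=
    exists_sum_sq_pow_mul_adjugate_pow_mulVec_eq hdet hsymm hlam heig e
  refine ⟨adjugate (A ^ ((n + 1) / 2)) *ᵥ e, fun h => ?_, ?_⟩
  · have := congrArg (A ^ ((n + 1) / 2) *ᵥ ·) h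
    rw [mulVec_mulVec, mul_adjugate, det_pow, hdet, one_pow, one_smul, one_mulVec,
      mulVec_zero] at this
    simp [e] at this
  · simp_rw [mulVec_mulVec, hsum]
    exact sum_Icc_pow_mul_inv_pow_le hlam hP hQ (by simpa [e] using hPQ.symm) n

end HyperbolicSymmetric

/-- two-sided geometric bounds `C₁ e^{h(A)n} ≤ min_{k≠0} Σ_{l=1}^n |Aˡk|² ≤ C₂ e^{h(A)n}`
for a symmetric hyperbolic `A ∈ SL(2,ℤ)` with entropy `h(A) = ln|λ|`. -/
theorem arithmetic_min_entropy_bounds_dim_two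
    (A : Matrix (Fin 2) (Fin 2) ℤ) (hdet : A.det = 1) (hsymm : A.IsSymm)
    (htr : 2 < |Matrix.trace A|)
    (lam : ℝ) (hlam : 1 < |lam|)
    (heig : ∃ v : Fin 2 → ℝ, v ≠ 0 ∧ (A.map (Int.cast : ℤ → ℝ)).mulVec v = lam • v) :
    ∃ C₁ C₂ : ℝ, 0 < C₁ ∧ 0 < C₂ ∧ ∀ n : ℕ, 1 ≤ n →
      C₁ * Real.exp (Real.log |lam| * n) ≤
        sInf {s : ℝ | ∃ k : Fin 2 → ℤ, k ≠ 0 ∧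
          s = ∑ l ∈ Finset.Icc 1 n, ∑ i, (((A ^ l).mulVec k i : ℤ) : ℝ) ^ 2} ∧
      sInf {s : ℝ | ∃ k : Fin 2 → ℤ, k ≠ 0 ∧
          s = ∑ l ∈ Finset.Icc 1 n, ∑ i, (((A ^ l).mulVec k i : ℤ) : ℝ) ^ 2} ≤
        C₂ * Real.exp (Real.log |lam| * n) := by
  have hL : 0 < |lam| := zero_lt_one.trans hlam
  have hgap : 0 < |lam - lam⁻¹| := abs_pos.mpr (sub_ne_zero.mpr (ne_inv_of_one_lt_abs hlam))
  have hL2 : 0 < |lam| ^ 2 - 1 := sub_pos.mpr (one_lt_pow₀ hlam two_ne_zero)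
  refine ⟨2 * |lam - lam⁻¹|⁻¹ / |lam|, 2 * |lam| ^ 2 / (|lam| ^ 2 - 1), by positivity,
    by positivity, fun n hn => ?_⟩
  rw [← Real.rpow_def_of_pos hL, Real.rpow_natCast]
  exact le_csInf_and_csInf_le
    (fun k hk => le_sum_Icc_sum_sq_pow_mulVec hdet hsymm htr hlam heig hk hn)
    (exists_sum_Icc_sum_sq_pow_mulVec_le hdet hsymm hlam heig n)
end

section
/- If A ∈ GL(d,ℚ) is irreducible over ℚ, then no nonzero rational vector q ∈ ℚ^d is orthogonal to any proper nonzero A-invariant subspace of ℝ^d. -/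
open Polynomial Matrix

private lemma charpoly_transpose_aux {d : ℕ} (A : Matrix (Fin d) (Fin d) ℚ) :
    Aᵀ.charpoly = A.charpoly := by
  have h : charmatrix Aᵀ = (charmatrix A)ᵀ := by
    ext i j
    by_cases h : i = j
    · subst h; simp [charmatrix_apply]
    · simp [charmatrix_apply_ne _ _ _ h, charmatrix_apply_ne _ _ _ (Ne.symm h),
        Matrix.transpose_apply]
  rw [Matrix.charpoly, h, Matrix.det_transpose, Matrix.charpoly]

/-- if `A ∈ GL(d,ℚ)` is irreducible over `ℚ`, then no nonzero rational
vector is orthogonal to a proper nonzero `A`-invariant subspace of `ℝ^d`. -/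
theorem irreducible_no_rational_vector_orthogonal_to_invariant_subspace
    (d : ℕ) (A : Matrix (Fin d) (Fin d) ℚ) (hA : IsUnit A)
    (hirr : Irreducible A.charpoly) :
    ∀ q : Fin d → ℚ, q ≠ 0 →
      ∀ S : Submodule ℝ (Fin d → ℝ), S ≠ ⊥ → S ≠ ⊤ →
        (∀ v ∈ S, (A.map (Rat.cast : ℚ → ℝ)).mulVec v ∈ S) →
        ¬ (∀ v ∈ S, ∑ i, ((q i : ℚ) : ℝ) * v i = 0) := by
  intro q hq S hSbot hStop hSinv horth
  set B := Aᵀ with hB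
  set p := A.charpoly with hp
  -- the annihilator ideal of q
  let I : Ideal (Polynomial ℚ) :=
    { carrier := {r | (Polynomial.aeval B r) *ᵥ q = 0}
      add_mem' := by
        intro a b ha hb
        simp only [Set.mem_setOf_eq, map_add, Matrix.add_mulVec] at *
        rw [ha, hb, add_zero]
      zero_mem' := by simp [Matrix.zero_mulVec]
      smul_mem' := by
        intro c x hx
        simp only [Set.mem_setOf_eq, smul_eq_mul, _root_.map_mul] at *
        rw [← Matrix.mulVec_mulVec, hx, Matrix.mulVec_zero] }
  have hpI : p ∈ I := by
    show (Polynomial.aeval B p) *ᵥ q = 0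
    rw [hp, ← charpoly_transpose_aux A, Matrix.aeval_self_charpoly, Matrix.zero_mulVec]
  have hItop : I ≠ ⊤ := by
    intro h
    have h1 : (1 : Polynomial ℚ) ∈ I := h ▸ Submodule.mem_top
    have : (Polynomial.aeval B (1 : Polynomial ℚ)) *ᵥ q = 0 := h1
    rw [_root_.map_one, Matrix.one_mulVec] at this
    exact hq this
  have hmax : (Ideal.span {p}).IsMaximal :=
    PrincipalIdealRing.isMaximal_of_irreducible hirr
  have hIeq : Ideal.span {p} = I :=
    hmax.eq_of_le hItop (Ideal.span_le.2 (Set.singleton_subset_iff.2 hpI))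
  have hdeg : p.natDegree = d := by
    rw [hp, Matrix.charpoly_natDegree_eq_dim, Fintype.card_fin]
  have hpne : p ≠ 0 := hirr.ne_zero
  -- the matrix with columns B^j q
  set K : Matrix (Fin d) (Fin d) ℚ := Matrix.of (fun i j => (B ^ (j : ℕ) *ᵥ q) i) with hK
  have hinj : Function.Injective K.mulVecLin := by
    rw [← LinearMap.ker_eq_bot, LinearMap.ker_eq_bot']
    intro c hc
    have hc' : K *ᵥ c = 0 := hc
    set r : Polynomial ℚ := ∑ j : Fin d, Polynomial.C (c j) * Polynomial.X ^ (j : ℕ) with hr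
    have hrI : r ∈ I := by
      show (Polynomial.aeval B r) *ᵥ q = 0
      have haev : (Polynomial.aeval B r) = ∑ j : Fin d, c j • B ^ (j : ℕ) := by
        rw [hr, map_sum]
        refine Finset.sum_congr rfl fun j _ => ?_
        simp [Algebra.smul_def, map_pow]
      rw [haev]
      have hsum : (∑ j : Fin d, c j • B ^ (j:ℕ)) *ᵥ q
          = ∑ j : Fin d, c j • (B ^ (j:ℕ) *ᵥ q) := by
        have hms := map_sum (Matrix.mulVec.addMonoidHomLeft q)
          (fun j : Fin d => c j • B ^ (j:ℕ)) Finset.univ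
        exact hms.trans (Finset.sum_congr rfl fun j _ =>
          Matrix.smul_mulVec (c j) (B ^ (j:ℕ)) q)
      rw [hsum]
      funext i
      have h0 := congrFun hc' i
      simp only [Matrix.mulVec, dotProduct, hK, Matrix.of_apply, Pi.zero_apply] at h0
      simp only [Finset.sum_apply, Pi.smul_apply, smul_eq_mul, Pi.zero_apply]
      rw [← h0]
      exact Finset.sum_congr rfl fun j _ => mul_comm _ _
    have hdvd : p ∣ r := by
      rw [← hIeq, Ideal.mem_span_singleton] at hrI
      exact hrI
    have hrz : r = 0 := by
      rcases eq_or_ne r 0 with h | h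
      · exact h
      · exfalso
        have hle : p.natDegree ≤ r.natDegree := Polynomial.natDegree_le_of_dvd hdvd h
        have hd1 : 0 < d := hdeg ▸ hirr.natDegree_pos
        have hle2 : r.natDegree ≤ d - 1 := by
          have : (∑ j : Fin d, Polynomial.C (c j) * Polynomial.X ^ (j:ℕ) :
              Polynomial ℚ).natDegree ≤ d - 1 := by
            refine Polynomial.natDegree_sum_le_of_forall_le Finset.univ
              (fun j : Fin d => Polynomial.C (c j) * Polynomial.X ^ (j:ℕ)) fun j _ => ?_
            refine le_trans (Polynomial.natDegree_C_mul_le _ _) ?_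
            rw [Polynomial.natDegree_X_pow]
            exact Nat.le_sub_one_of_lt j.isLt
          rw [hr]
          exact this
        have hlt : r.natDegree < d := by omega
        omega
    funext j
    have : r.coeff (j : ℕ) = 0 := by rw [hrz]; simp
    rw [hr] at this
    rw [Polynomial.finset_sum_coeff] at this
    simp only [Polynomial.coeff_C_mul, Polynomial.coeff_X_pow] at this
    rw [Finset.sum_eq_single j] at this
    · simpa using this
    · intro b _ hbj
      exact mul_eq_zero_of_right _
        (if_neg (fun h => absurd (Fin.val_injective h).symm hbj))
    · simp
  have hsurj : Function.Surjective K.mulVecLin :=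
    (LinearMap.injective_iff_surjective).mp hinj
  -- every iterate annihilates S
  have key : ∀ n : ℕ, ∀ v ∈ S, ∑ i, (((B ^ n *ᵥ q) i : ℚ) : ℝ) * v i = 0 := by
    intro n
    induction n with
    | zero =>
      intro v hv
      simpa using horth v hv
    | succ n ih =>
      intro v hv
      have hv' := hSinv v hv
      have h2 := ih _ hv'
      have hstep : ∀ i, (((B ^ (n+1) *ᵥ q) i : ℚ) : ℝ)
          = ∑ j, ((A j i : ℚ) : ℝ) * (((B ^ n *ᵥ q) j : ℚ) : ℝ) := by
        intro i
        rw [pow_succ', ← Matrix.mulVec_mulVec]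
        simp only [Matrix.mulVec, dotProduct, hB, Matrix.transpose_apply]
        push_cast
        rfl
      calc ∑ i, (((B ^ (n+1) *ᵥ q) i : ℚ) : ℝ) * v i
          = ∑ i, ∑ j, ((A j i : ℚ) : ℝ) * (((B ^ n *ᵥ q) j : ℚ) : ℝ) * v i := by
            refine Finset.sum_congr rfl fun i _ => ?_
            rw [hstep, Finset.sum_mul]
        _ = ∑ j, (((B ^ n *ᵥ q) j : ℚ) : ℝ) * ((A.map (Rat.cast : ℚ → ℝ)) *ᵥ v) j := by
            rw [Finset.sum_comm]
            refine Finset.sum_congr rfl fun j _ => ?_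
            simp only [Matrix.mulVec, dotProduct, Matrix.map_apply, Finset.mul_sum]
            refine Finset.sum_congr rfl fun i _ => ?_
            ring
        _ = 0 := h2
  -- hence every rational vector annihilates S
  have hall : ∀ w : Fin d → ℚ, ∀ v ∈ S, ∑ i, ((w i : ℚ) : ℝ) * v i = 0 := by
    intro w v hv
    obtain ⟨c, hc⟩ := hsurj w
    have hc' : K *ᵥ c = w := hc
    have : ∀ i, ((w i : ℚ) : ℝ) = ∑ j, ((c j : ℚ) : ℝ) * (((B ^ (j:ℕ) *ᵥ q) i : ℚ) : ℝ) := by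
      intro i
      rw [← hc']
      simp only [Matrix.mulVec, dotProduct, hK, Matrix.of_apply]
      push_cast
      refine Finset.sum_congr rfl fun j _ => ?_
      ring
    calc ∑ i, ((w i : ℚ) : ℝ) * v i
        = ∑ i, ∑ j, ((c j : ℚ) : ℝ) * ((((B ^ (j:ℕ) *ᵥ q) i : ℚ) : ℝ) * v i) := by
          refine Finset.sum_congr rfl fun i _ => ?_
          rw [this i, Finset.sum_mul]
          exact Finset.sum_congr rfl fun j _ => by ring
      _ = ∑ j, ((c j : ℚ) : ℝ) * ∑ i, (((B ^ (j:ℕ) *ᵥ q) i : ℚ) : ℝ) * v i := by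
          rw [Finset.sum_comm]
          exact Finset.sum_congr rfl fun j _ => by rw [Finset.mul_sum]
      _ = 0 := by
          refine Finset.sum_eq_zero fun j _ => ?_
          rw [key (j:ℕ) v hv, mul_zero]
  -- conclude S = ⊥
  apply hSbot
  rw [Submodule.eq_bot_iff]
  intro v hv
  funext k
  have hk := hall (Pi.single k 1) v hv
  simp only [Pi.single_apply] at hk
  rw [Finset.sum_eq_single k] at hk
  · simpa using hk
  · intro b _ hbk
    simp [hbk]
  · simp
end

section
/- Let A ∈ SL(d,ℤ). The following are equivalent: (a) A possesses an eigenvalue which is a root of unity not equal to 1; (b) there exists a nonzero k ∈ ℤ^d and a positive integer n such that k + Ak + A²k + ... + A^{n−1}k = 0. -/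
open Polynomial Matrix Finset

/-- Evaluation of the characteristic polynomial as a determinant. -/
lemma my_eval_charpoly {d : ℕ} (M : Matrix (Fin d) (Fin d) ℂ) (μ : ℂ) :
    M.charpoly.eval μ = (algebraMap ℂ (Matrix (Fin d) (Fin d) ℂ) μ - M).det := by
  rw [Matrix.charpoly, ← Polynomial.coe_evalRingHom, RingHom.map_det]
  congr 1
  ext i j
  by_cases h : i = j <;>
    simp [charmatrix_apply, Matrix.algebraMap_matrix_apply, h, Matrix.one_apply,
      Matrix.diagonal_apply, Matrix.sub_apply]

/-- Spectrum of a complex matrix = roots of its characteristic polynomial. -/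
lemma my_mem_spectrum_iff {d : ℕ} (M : Matrix (Fin d) (Fin d) ℂ) (μ : ℂ) :
    μ ∈ spectrum ℂ M ↔ M.charpoly.eval μ = 0 := by
  rw [spectrum.mem_iff, Matrix.isUnit_iff_isUnit_det, isUnit_iff_ne_zero, not_ne_iff,
    my_eval_charpoly]

lemma my_geom_zero_iff {n : ℕ} (hn : 0 < n) (μ : ℂ) :
    (∑ i ∈ Finset.range n, μ ^ i) = 0 ↔ μ ≠ 1 ∧ μ ^ n = 1 := by
  constructor
  · intro h
    have h1 : μ ≠ 1 := by
      rintro rfl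
      simp only [one_pow, Finset.sum_const, Finset.card_range, nsmul_eq_mul, mul_one] at h
      exact_mod_cast (Nat.cast_ne_zero (R := ℂ)).mpr hn.ne' h
    refine ⟨h1, ?_⟩
    have hg := geom_sum_mul μ n
    rw [h, zero_mul] at hg
    exact (sub_eq_zero.mp hg.symm)
  · rintro ⟨h1, hpow⟩
    have hg := geom_sum_mul μ n
    rw [hpow, sub_self] at hg
    exact (mul_eq_zero.mp hg).resolve_right (sub_ne_zero.mpr h1)

/-- Membership in the roots of the mapped charpoly = membership in the spectrum
of the complexified matrix. -/
lemma my_mem_roots_iff {d : ℕ} (A : Matrix (Fin d) (Fin d) ℤ) (μ : ℂ) :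
    μ ∈ (A.charpoly.map (algebraMap ℤ ℂ)).roots ↔
      μ ∈ spectrum ℂ (A.map (algebraMap ℤ ℂ)) := by
  rw [Polynomial.mem_roots ((A.charpoly_monic.map (algebraMap ℤ ℂ)).ne_zero),
    my_mem_spectrum_iff, Matrix.charpoly_map]
  exact Iff.rfl

lemma my_sum_mulVec {d : ℕ} {n : ℕ} (M : ℕ → Matrix (Fin d) (Fin d) ℤ) (k : Fin d → ℤ) :
    (∑ l ∈ Finset.range n, M l).mulVec k = ∑ l ∈ Finset.range n, (M l).mulVec k := by
  induction n with
  | zero => simp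
  | succ m ih => rw [Finset.sum_range_succ, Finset.sum_range_succ, Matrix.add_mulVec, ih]

/-- `A ∈ SL(d,ℤ)` has an eigenvalue that is a root of unity different
from 1 iff there is a nonzero integer vector `k` and `n ≥ 1` with
`k + Ak + ⋯ + A^{n-1}k = 0`. -/
theorem root_of_unity_eigenvalue_iff_vanishing_orbit_sum
    (d : ℕ) (A : Matrix (Fin d) (Fin d) ℤ)
    (hdet : A.det = 1 ∨ A.det = -1) :
    (∃ lam ∈ (A.charpoly.map (algebraMap ℤ ℂ)).roots,
        lam ≠ 1 ∧ ∃ n : ℕ, 0 < n ∧ lam ^ n = 1) ↔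
    (∃ k : Fin d → ℤ, k ≠ 0 ∧ ∃ n : ℕ, 0 < n ∧
        ∑ l ∈ Finset.range n, (A ^ l).mulVec k = 0) := by
  classical
  set φ : Matrix (Fin d) (Fin d) ℤ →+* Matrix (Fin d) (Fin d) ℂ :=
    (algebraMap ℤ ℂ).mapMatrix with hφ
  have hφA : φ A = A.map (algebraMap ℤ ℂ) := rfl
  -- B over ℂ as a polynomial in the complexified matrix
  have haeval : ∀ n : ℕ,
      Polynomial.aeval (A.map (algebraMap ℤ ℂ)) (∑ i ∈ Finset.range n, (X : ℂ[X]) ^ i)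
        = φ (∑ l ∈ Finset.range n, A ^ l) := by
    intro n
    simp [map_sum, map_pow, hφA]
  have heval : ∀ (n : ℕ) (μ : ℂ),
      Polynomial.eval μ (∑ i ∈ Finset.range n, (X : ℂ[X]) ^ i)
        = ∑ i ∈ Finset.range n, μ ^ i := by
    intro n μ
    simp [Polynomial.eval_finset_sum]
  -- det over ℤ vanishes iff det over ℂ vanishes
  have hdetcast : ∀ B : Matrix (Fin d) (Fin d) ℤ,
      (φ B).det = 0 ↔ B.det = 0 := by
    intro B
    rw [hφ, ← RingHom.map_det, algebraMap_int_eq]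
    simp
  -- 0 in the spectrum iff det vanishes
  have hzero_spec : ∀ M : Matrix (Fin d) (Fin d) ℂ,
      (0 : ℂ) ∈ spectrum ℂ M ↔ M.det = 0 := by
    intro M
    rw [spectrum.mem_iff, map_zero, zero_sub, IsUnit.neg_iff _,
      Matrix.isUnit_iff_isUnit_det, isUnit_iff_ne_zero, not_ne_iff]
  constructor
  · rintro ⟨lam, hroots, hne, n, hn, hpow⟩
    have hspec : lam ∈ spectrum ℂ (A.map (algebraMap ℤ ℂ)) :=
      (my_mem_roots_iff A lam).mp hroots
    have hs : (∑ i ∈ Finset.range n, lam ^ i) = 0 :=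
      (my_geom_zero_iff hn lam).mpr ⟨hne, hpow⟩
    have h0 : (0 : ℂ) ∈ spectrum ℂ (φ (∑ l ∈ Finset.range n, A ^ l)) := by
      rw [← haeval n]
      refine spectrum.subset_polynomial_aeval _ _ ⟨lam, hspec, ?_⟩
      show Polynomial.eval lam _ = 0
      rw [heval n lam]; exact hs
    have hdet0 : (∑ l ∈ Finset.range n, A ^ l).det = 0 :=
      (hdetcast _).mp ((hzero_spec _).mp h0)
    obtain ⟨k, hk, hks⟩ := Matrix.exists_mulVec_eq_zero_iff.mpr hdet0
    refine ⟨k, hk, n, hn, ?_⟩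
    rw [← my_sum_mulVec]
    exact hks
  · rintro ⟨k, hk, n, hn, hsum⟩
    -- d > 0
    have hd : d ≠ 0 := by
      rintro rfl
      exact hk (funext fun i => i.elim0)
    -- spectrum nonempty
    have hnonempty : (spectrum ℂ (A.map (algebraMap ℤ ℂ))).Nonempty := by
      obtain ⟨μ, hμ⟩ := IsAlgClosed.exists_root (A.map (algebraMap ℤ ℂ)).charpoly
        (by rw [Matrix.charpoly_degree_eq_dim, Fintype.card_fin]; exact_mod_cast hd)
      exact ⟨μ, (my_mem_spectrum_iff _ μ).mpr hμ⟩
    -- det B = 0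
    have hBk : (∑ l ∈ Finset.range n, A ^ l).mulVec k = 0 := by
      rw [my_sum_mulVec]
      exact hsum
    have hdet0 : (∑ l ∈ Finset.range n, A ^ l).det = 0 :=
      Matrix.exists_mulVec_eq_zero_iff.mp ⟨k, hk, hBk⟩
    have h0 : (0 : ℂ) ∈ spectrum ℂ
        (Polynomial.aeval (A.map (algebraMap ℤ ℂ)) (∑ i ∈ Finset.range n, (X : ℂ[X]) ^ i)) := by
      rw [haeval n, hzero_spec, hdetcast]
      exact hdet0
    rw [spectrum.map_polynomial_aeval_of_nonempty _ _ hnonempty] at h0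
    obtain ⟨μ, hμspec, hμ⟩ := h0
    have hval : Polynomial.eval μ (∑ i ∈ Finset.range n, (X : ℂ[X]) ^ i) = 0 := hμ
    rw [heval n μ] at hval
    obtain ⟨hμ1, hμpow⟩ := (my_geom_zero_iff hn μ).mp hval
    exact ⟨μ, (my_mem_roots_iff A μ).mpr hμspec, hμ1, n, hn, hμpow⟩
end
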